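/- arXiv:1906.08514 — 7 statements merged into one kernel-verified Lean document; each statement's English description precedes it below -/
import Mathlib

section
/- Let V₁,…,V_k be hyperplanes (codimension-1 subspaces) in ℝⁿ with the Euclidean norm. Then there exists a vector x ∈ ℝⁿ with ‖x‖₂ = 1 such that dist(x, V_j) ≥ 1/(2kn) for all j = 1,…,k. -/
open Finset RealInnerProductSpace

/-!
Take unit normals `u_j` of the hyperplanes; each has a coordinate `i_j` with `|u_j i_j| ≥ 1/√n`.
Among the grid points `c ∈ {0,…,k}ⁿ`, two that differ only in coordinate `i_j` have values of
`⟪c, u_j⟫` at least `1/√n` apart, so at most `(k+1)^(n-1)` of them satisfy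
`|⟪c, u_j⟫| < 1/(2√n)`. As `k (k+1)^(n-1) < (k+1)^n`, some grid point `c` avoids all `k` bad sets;
since `‖c‖ ≤ k√n`, the unit vector `c / ‖c‖` has `|⟪c/‖c‖, u_j⟫| ≥ 1/(2kn)`, and this inner
product is the distance to `V_j`.
-/

lemma EuclideanSpace.norm_le_sqrt_card_mul_of_abs_apply_le {ι : Type*} [Fintype ι] [Nonempty ι]
    {x : EuclideanSpace ℝ ι} {M : ℝ} (hx : ∀ i, |x i| ≤ M) : ‖x‖ ≤ √(Fintype.card ι) * M := by
  classical
  refine (OrthonormalBasis.norm_le_card_mul_iSup_norm_inner (EuclideanSpace.basisFun ι ℝ) x).trans ?_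
  gcongr
  exact ciSup_le fun j ↦ by simpa [EuclideanSpace.inner_single_left] using hx j

lemma EuclideanSpace.exists_norm_le_sqrt_card_mul_abs_apply {ι : Type*} [Fintype ι] [Nonempty ι]
    (x : EuclideanSpace ℝ ι) : ∃ i, ‖x‖ ≤ √(Fintype.card ι) * |x i| :=
  (Finite.exists_max fun i ↦ |x i|).imp fun _ ↦ norm_le_sqrt_card_mul_of_abs_apply_le

lemma Submodule.exists_norm_eq_one_mem_orthogonal {𝕜 E : Type*} [RCLike 𝕜] [NormedAddCommGroup E]
    [InnerProductSpace 𝕜 E] (K : Submodule 𝕜 E) [K.HasOrthogonalProjection] (hK : K ≠ ⊤) :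
    ∃ u ∈ Kᗮ, ‖u‖ = 1 := by
  obtain ⟨w, hw, hw0⟩ := Kᗮ.ne_bot_iff.mp (mt K.orthogonal_eq_bot_iff.mp hK)
  exact ⟨(‖w‖⁻¹ : 𝕜) • w, Kᗮ.smul_mem _ hw, norm_smul_inv_norm hw0⟩

lemma Submodule.abs_inner_le_infDist {E : Type*} [NormedAddCommGroup E] [InnerProductSpace ℝ E]
    {K : Submodule ℝ E} {u : E} (hu : u ∈ Kᗮ) (hu1 : ‖u‖ = 1) (x : E) :
    |⟪x, u⟫| ≤ Metric.infDist x K := by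
  refine (Metric.le_infDist ⟨0, K.zero_mem⟩).mpr fun y hy ↦ ?_
  calc |⟪x, u⟫| = |⟪x - y, u⟫| := by
        rw [inner_sub_left, K.inner_right_of_mem_orthogonal hy hu, sub_zero]
    _ ≤ ‖x - y‖ * ‖u‖ := abs_real_inner_le_norm _ _
    _ = dist x y := by rw [hu1, mul_one, dist_eq_norm]

lemma one_le_abs_natCast_sub_natCast {a b : ℕ} (h : a ≠ b) : (1 : ℝ) ≤ |(a : ℝ) - b| := by
  exact_mod_cast Int.one_le_abs (sub_ne_zero.mpr (Int.natCast_inj.not.mpr h))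

lemma card_filter_abs_sum_mul_lt_le {ι : Type*} [Fintype ι] [DecidableEq ι] (m : ℕ) (u : ι → ℝ)
    {i₀ : ι} {δ : ℝ} (hδ : δ ≤ |u i₀|) :
    #{c : ι → Fin m | |∑ i, (c i : ℝ) * u i| < δ / 2} ≤ m ^ (Fintype.card ι - 1) := by
  let restrict (c : ι → Fin m) (i : {i // i ≠ i₀}) : Fin m := c i
  have hinj : Set.InjOn restrict {c : ι → Fin m | |∑ i, (c i : ℝ) * u i| < δ / 2} := by
    intro c hc c' hc' heq
    have hoff : ∀ i ≠ i₀, c i = c' i := fun i hi ↦ congrFun heq ⟨i, hi⟩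
    by_contra hne
    have hne₀ : (c i₀ : ℕ) ≠ c' i₀ := fun h ↦ hne <| funext fun i ↦
      if hi : i = i₀ then hi ▸ Fin.ext h else hoff i hi
    have hdiff : ∑ i, (c i : ℝ) * u i - ∑ i, (c' i : ℝ) * u i = ((c i₀ : ℝ) - c' i₀) * u i₀ := by
      rw [← sum_sub_distrib, sum_eq_single i₀ (fun i _ hi ↦ by rw [hoff i hi, sub_self])
        (fun h ↦ absurd (mem_univ i₀) h), sub_mul]
    have hfar : δ ≤ |∑ i, (c i : ℝ) * u i - ∑ i, (c' i : ℝ) * u i| := by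
      rw [hdiff, abs_mul]
      exact hδ.trans (le_mul_of_one_le_left (abs_nonneg _) (one_le_abs_natCast_sub_natCast hne₀))
    linarith [abs_sub (∑ i, (c i : ℝ) * u i) (∑ i, (c' i : ℝ) * u i), hc.out, hc'.out]
  calc _ ≤ Fintype.card ({i // i ≠ i₀} → Fin m) :=
        card_le_card_of_injOn restrict (fun _ _ ↦ mem_coe.mpr (mem_univ _)) (by simpa using hinj)
    _ = m ^ (Fintype.card ι - 1) := by simp [Fintype.card_subtype_compl]

lemma exists_fin_grid_point_forall_le_abs_sum_mul {ι κ : Type*} [Fintype ι] [DecidableEq ι]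
    [Nonempty ι] [Fintype κ] (u : κ → ι → ℝ) {δ : ℝ} (hu : ∀ j, ∃ i, δ ≤ |u j i|) :
    ∃ c : ι → Fin (Fintype.card κ + 1), ∀ j, δ / 2 ≤ |∑ i, (c i : ℝ) * u j i| := by
  set m := Fintype.card κ + 1
  let bad (j : κ) : Finset (ι → Fin m) := {c | |∑ i, (c i : ℝ) * u j i| < δ / 2}
  have hcard : #(univ.biUnion bad) < #(univ : Finset (ι → Fin m)) := calc
    _ ≤ ∑ j, #(bad j) := card_biUnion_le
    _ ≤ ∑ _j : κ, m ^ (Fintype.card ι - 1) :=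
        sum_le_sum fun j _ ↦ card_filter_abs_sum_mul_lt_le m (u j) (hu j).choose_spec
    _ < m * m ^ (Fintype.card ι - 1) := by
        rw [sum_const, card_univ, smul_eq_mul]
        exact Nat.mul_lt_mul_of_pos_right (Nat.lt_succ_self _) (by positivity)
    _ = #(univ : Finset (ι → Fin m)) := by
        rw [card_univ, Fintype.card_fun, Fintype.card_fin, ← pow_succ',
          Nat.sub_add_cancel Fintype.card_pos]
  obtain ⟨c, -, hc⟩ := exists_mem_notMem_of_card_lt_card hcard
  refine ⟨c, fun j ↦ not_lt.mp fun h ↦ hc (mem_biUnion.mpr ⟨j, mem_univ j, ?_⟩)⟩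
  simpa [bad] using h

lemma EuclideanSpace.exists_norm_le_forall_le_abs_inner {ι κ : Type*} [Fintype ι] [Nonempty ι]
    [Fintype κ] (u : κ → EuclideanSpace ℝ ι) (hu : ∀ j, ‖u j‖ = 1) :
    ∃ y : EuclideanSpace ℝ ι, ‖y‖ ≤ √(Fintype.card ι) * Fintype.card κ ∧
      ∀ j, 1 / √(Fintype.card ι) / 2 ≤ |⟪y, u j⟫| := by
  classical
  have hbig (j : κ) : ∃ i, 1 / √(Fintype.card ι) ≤ |u j i| := by
    obtain ⟨i, hi⟩ := (u j).exists_norm_le_sqrt_card_mul_abs_apply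
    exact ⟨i, by rwa [div_le_iff₀' (by positivity), ← hu j]⟩
  obtain ⟨c, hc⟩ := exists_fin_grid_point_forall_le_abs_sum_mul (fun j i ↦ u j i) hbig
  refine ⟨WithLp.toLp 2 fun i ↦ (c i : ℝ), norm_le_sqrt_card_mul_of_abs_apply_le fun i ↦ ?_,
    fun j ↦ ?_⟩
  · simpa using Nat.lt_succ_iff.mp (c i).isLt
  · simpa [PiLp.inner_apply, mul_comm] using hc j

/-- Given hyperplanes `V₁,…,V_k` in Euclidean `ℝⁿ`, there is a unit
vector `x` with `dist(x, V_j) ≥ 1/(2kn)` for all `j`. -/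
theorem stmt1 (n k : ℕ) (hk : 0 < k)
    (V : Fin k → Submodule ℝ (EuclideanSpace ℝ (Fin n)))
    (hV : ∀ j, Module.finrank ℝ (EuclideanSpace ℝ (Fin n) ⧸ V j) = 1) :
    ∃ x : EuclideanSpace ℝ (Fin n), ‖x‖ = 1 ∧
      ∀ j, 1 / (2 * (k : ℝ) * (n : ℝ)) ≤ Metric.infDist x (V j : Set (EuclideanSpace ℝ (Fin n))) := by
  have hVtop (j : Fin k) : V j ≠ ⊤ :=
    Submodule.Quotient.nontrivial_iff.mp (Module.nontrivial_of_finrank_eq_succ (hV j))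
  choose u hu_mem hu_norm using fun j ↦ (V j).exists_norm_eq_one_mem_orthogonal (hVtop j)
  have hn : 0 < n := Nat.pos_of_ne_zero fun h ↦ by
    subst h
    simpa [Subsingleton.elim (u ⟨0, hk⟩) 0] using hu_norm ⟨0, hk⟩
  have : Nonempty (Fin n) := Fin.pos_iff_nonempty.mp hn
  obtain ⟨y, hy_norm, hy_inner⟩ := EuclideanSpace.exists_norm_le_forall_le_abs_inner u hu_norm
  simp only [Fintype.card_fin] at hy_norm hy_inner
  have hy : y ≠ 0 := by
    rintro rfl
    have := hy_inner ⟨0, hk⟩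
    simp only [inner_zero_left, abs_zero] at this
    exact this.not_gt (by positivity)
  refine ⟨‖y‖⁻¹ • y, norm_smul_inv_norm hy, fun j ↦ le_trans ?_
    ((V j).abs_inner_le_infDist (hu_mem j) (hu_norm j) _)⟩
  rw [real_inner_smul_left, abs_mul, abs_inv, abs_norm, ← div_eq_inv_mul]
  calc 1 / (2 * (k : ℝ) * n) = 1 / √n / 2 / (√n * k) := by
        have : (n : ℝ) ≠ 0 := by positivity
        field_simp
        rw [Real.sq_sqrt n.cast_nonneg]
    _ ≤ _ := div_le_div₀ (abs_nonneg _) (hy_inner j) (norm_pos_iff.mpr hy) hy_norm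
end

section
/- Let H be a real Hilbert space and let (φ_j)_{j∈ℕ} be a sequence of bounded linear functionals on H, each of norm 1. Then there exist a sequence of positive reals (δ_j)_{j∈ℕ} with lim_{j→∞} (1/j)·log δ_j = 0 and a unit vector x ∈ H such that |φ_j(x)| ≥ δ_j for all j. -/
/-!
Represent `φ j` by the unit vector `v j` and orthonormalise the `v j` by Gram–Schmidt into `e k`
(some of which may vanish). For `x = ∑ₖ aₖ eₖ`, the value `⟪v j, x⟫ = ∑_{k ≤ j} ⟪v j, e k⟫ aₖ` is a
lower-triangular form, and Parseval gives some `k ≤ j` with `|⟪v j, e k⟫| ≥ 1/(j+1)`.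
Take `aₖ = uₖ/(k+1)` with `uₖ` independent and uniform on `[0,1]`: anticoncentration of the single
coordinate `uₖ` makes `|⟪v j, x⟫| < 1/(4(j+1)⁴)` an event of probability at most `1/(2(j+1)²)`.
These probabilities add up to `π²/12 < 1`, so some `u` avoids all of them, and normalising `x`
gives `δ_j = 1/(4‖x‖(j+1)⁴)`.
-/

open Filter MeasureTheory ProbabilityTheory Set Submodule InnerProductSpace Real
open scoped ENNReal unitInterval Topology RealInnerProductSpace

section Orthogonal

variable {ι E : Type*} [NormedAddCommGroup E] [InnerProductSpace ℝ E]

theorem summable_of_pairwise_inner_eq_zero [CompleteSpace E] {f : ι → E}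
    (hf : Pairwise fun i j => ⟪f i, f j⟫ = 0) (h : Summable fun i => ‖f i‖ ^ 2) : Summable f := by
  have hK : OrthogonalFamily ℝ (fun i => ℝ ∙ f i) fun i => (ℝ ∙ f i).subtypeₗᵢ :=
    orthogonalFamily_iff_pairwise.2 fun i j hij =>
      isOrtho_span.2 fun _ hx _ hy => by
        rw [mem_singleton_iff.1 hx, mem_singleton_iff.1 hy]
        exact hf hij
  exact (hK.summable_iff_norm_sq_summable fun i => ⟨f i, mem_span_singleton_self _⟩).2 h

variable {e : ι → E} (he : Pairwise fun i j => ⟪e i, e j⟫ = 0)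
  (he_norm : ∀ i, e i ≠ 0 → ‖e i‖ = 1)
include he he_norm

theorem sum_inner_smul_eq_self_of_mem_span {s : Finset ι} {x : E}
    (hx : x ∈ span ℝ (e '' s)) : ∑ i ∈ s, ⟪e i, x⟫ • e i = x := by
  classical
  induction hx using span_induction with
  | mem y hy =>
    obtain ⟨k, hk, rfl⟩ := hy
    rw [Finset.sum_eq_single_of_mem k hk fun i _ hik => by rw [he hik, zero_smul]]
    by_cases hek : e k = 0
    · simp [hek]
    · rw [real_inner_self_eq_norm_sq, he_norm k hek, one_pow, one_smul]
  | zero => simp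
  | add y z _ _ hy hz => simp only [inner_add_right, add_smul, Finset.sum_add_distrib, hy, hz]
  | smul a y _ hy => simp only [real_inner_smul_right, mul_smul, ← Finset.smul_sum, hy]

theorem sum_sq_inner_eq_norm_sq_of_mem_span {s : Finset ι} {x : E}
    (hx : x ∈ span ℝ (e '' s)) : ∑ i ∈ s, ⟪e i, x⟫ ^ 2 = ‖x‖ ^ 2 := by
  calc ∑ i ∈ s, ⟪e i, x⟫ ^ 2 = ⟪x, ∑ i ∈ s, ⟪e i, x⟫ • e i⟫ := by
        simp only [inner_sum, real_inner_smul_right, real_inner_comm x, sq]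
    _ = ‖x‖ ^ 2 := by
        rw [sum_inner_smul_eq_self_of_mem_span he he_norm hx, real_inner_self_eq_norm_sq]

end Orthogonal

section GramSchmidt

variable {ι E : Type*} [NormedAddCommGroup E] [InnerProductSpace ℝ E]
  [LinearOrder ι] [LocallyFiniteOrderBot ι] [WellFoundedLT ι] (v : ι → E)

theorem gramSchmidtNormed_pairwise_orthogonal :
    Pairwise fun i j => ⟪gramSchmidtNormed ℝ v i, gramSchmidtNormed ℝ v j⟫ = 0 := fun _ _ hij => by
  simp [gramSchmidtNormed, real_inner_smul_left, real_inner_smul_right,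
    gramSchmidt_orthogonal ℝ v hij]

theorem norm_gramSchmidtNormed_le_one (i : ι) : ‖gramSchmidtNormed ℝ v i‖ ≤ 1 := by
  by_cases h : gramSchmidtNormed ℝ v i = 0
  · simp [h]
  · exact (gramSchmidtNormed_unit_length' h).le

theorem inner_gramSchmidtNormed_eq_zero_of_lt {i j : ι} (hij : i < j) :
    ⟪v i, gramSchmidtNormed ℝ v j⟫ = 0 := by
  rw [gramSchmidtNormed, real_inner_smul_right, real_inner_comm,
    gramSchmidt_inv_triangular ℝ v hij, mul_zero]

theorem sum_sq_inner_gramSchmidtNormed (j : ι) :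
    ∑ k ∈ Finset.Iic j, ⟪v j, gramSchmidtNormed ℝ v k⟫ ^ 2 = ‖v j‖ ^ 2 := by
  have hmem : v j ∈ span ℝ (gramSchmidtNormed ℝ v '' (Finset.Iic j : Set ι)) := by
    rw [Finset.coe_Iic, span_gramSchmidtNormed]
    exact mem_span_gramSchmidt ℝ v le_rfl
  simp_rw [real_inner_comm _ (v j)]
  exact sum_sq_inner_eq_norm_sq_of_mem_span (gramSchmidtNormed_pairwise_orthogonal v)
    (fun _ => gramSchmidtNormed_unit_length') hmem

theorem exists_inner_eq_sum_gramSchmidtNormed [CompleteSpace E] {a : ι → ℝ}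
    (ha : Summable fun k => a k ^ 2) :
    ∃ x : E, ∀ j, ⟪v j, x⟫ = ∑ k ∈ Finset.Iic j, a k * ⟪v j, gramSchmidtNormed ℝ v k⟫ := by
  set e := gramSchmidtNormed ℝ v
  have hsummable : Summable fun k => a k • e k := by
    refine summable_of_pairwise_inner_eq_zero (fun i j hij => ?_) (ha.of_nonneg_of_le
      (fun _ => by positivity) fun k => ?_)
    · simp [e, real_inner_smul_left, real_inner_smul_right,
        gramSchmidtNormed_pairwise_orthogonal v hij]
    · rw [norm_smul, mul_pow, Real.norm_eq_abs, sq_abs]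
      exact mul_le_of_le_one_right (sq_nonneg _)
        (pow_le_one₀ (norm_nonneg _) (norm_gramSchmidtNormed_le_one v k))
  refine ⟨∑' k, a k • e k, fun j => ?_⟩
  have hinner := (innerSL ℝ (v j)).hasSum hsummable.hasSum
  simp only [innerSL_apply_apply, real_inner_smul_right] at hinner
  rw [← hinner.tsum_eq]
  exact tsum_eq_sum fun k hk => by
    rw [inner_gramSchmidtNormed_eq_zero_of_lt v (not_le.1 (by simpa using hk)), mul_zero]

end GramSchmidt

theorem exists_le_abs_inner_gramSchmidtNormed_div {E : Type*} [NormedAddCommGroup E]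
    [InnerProductSpace ℝ E] {v : ℕ → E} (hv : ∀ j, ‖v j‖ = 1) (j : ℕ) :
    ∃ k ∈ Finset.Iic j,
      1 / ((j : ℝ) + 1) ^ 2 ≤ |⟪v j, gramSchmidtNormed ℝ v k⟫ / ((k : ℝ) + 1)| := by
  have hsum : ∑ _k ∈ Finset.Iic j, (1 / ((j : ℝ) + 1)) ^ 2
      ≤ ∑ k ∈ Finset.Iic j, ⟪v j, gramSchmidtNormed ℝ v k⟫ ^ 2 := by
    rw [sum_sq_inner_gramSchmidtNormed, hv, Finset.sum_const, Nat.card_Iic, nsmul_eq_mul]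
    field_simp
    push_cast
    nlinarith
  obtain ⟨k, hk, hle⟩ := Finset.exists_le_of_sum_le ⟨j, Finset.mem_Iic.2 le_rfl⟩ hsum
  have hcoef : 1 / ((j : ℝ) + 1) ≤ |⟪v j, gramSchmidtNormed ℝ v k⟫| := by
    simpa [abs_of_pos (by positivity : (0 : ℝ) < j + 1)] using sq_le_sq.1 hle
  have hkj : (k : ℝ) + 1 ≤ j + 1 := by exact_mod_cast Nat.succ_le_succ (Finset.mem_Iic.1 hk)
  refine ⟨k, hk, ?_⟩
  rw [abs_div, abs_of_pos (by positivity : (0 : ℝ) < k + 1), sq, ← div_div]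
  gcongr

theorem hasSum_one_div_succ_sq : HasSum (fun n : ℕ => 1 / ((n : ℝ) + 1) ^ 2) (π ^ 2 / 6) := by
  simpa using (hasSum_nat_add_iff' 1).2 hasSum_zeta_two

theorem tendsto_one_div_succ_mul_log_div_pow {C : ℝ} (hC : 0 < C) (p : ℕ) :
    Tendsto (fun j : ℕ => 1 / ((j : ℝ) + 1) * log (C / ((j : ℝ) + 1) ^ p)) atTop (𝓝 0) := by
  have hreal : Tendsto (fun t : ℝ => 1 / t * log (C / t ^ p)) atTop (𝓝 0) := by
    have hlim := (tendsto_const_nhds (x := log C).div_atTop tendsto_id).sub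
      (isLittleO_log_id_atTop.tendsto_div_nhds_zero.const_mul (p : ℝ))
    rw [mul_zero, sub_zero] at hlim
    refine hlim.congr' ((eventually_gt_atTop 0).mono fun t ht => ?_)
    simp only [id, log_div hC.ne' (pow_pos ht p).ne', log_pow]
    ring
  exact hreal.comp (tendsto_atTop_add_const_right _ 1 tendsto_natCast_atTop_atTop)

theorem measure_abs_add_lt_le_of_indepFun {Ω : Type*} [MeasurableSpace Ω] {P : Measure Ω}
    [IsProbabilityMeasure P] {Y Z : Ω → ℝ} (hY : Measurable Y) (hZ : Measurable Z)
    (hYZ : IndepFun Y Z P) {δ : ℝ} {ε : ℝ≥0∞} (hε : ∀ a, P (Z ⁻¹' Metric.ball a δ) ≤ ε) :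
    P {ω | |Y ω + Z ω| < δ} ≤ ε := by
  have hS : MeasurableSet {p : ℝ × ℝ | |p.1 + p.2| < δ} :=
    measurableSet_lt (by fun_prop) measurable_const
  have hsection (y : ℝ) : Prod.mk y ⁻¹' {p : ℝ × ℝ | |p.1 + p.2| < δ} = Metric.ball (-y) δ := by
    ext z; simp [Real.dist_eq, add_comm]
  have := Measure.isProbabilityMeasure_map (μ := P) hY.aemeasurable
  calc P {ω | |Y ω + Z ω| < δ}
      = P.map (fun ω => (Y ω, Z ω)) {p | |p.1 + p.2| < δ} :=
        (Measure.map_apply (hY.prodMk hZ) hS).symm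
    _ = ∫⁻ y, P.map Z (Metric.ball (-y) δ) ∂P.map Y := by
      rw [(indepFun_iff_map_prod_eq_prod_map_map hY.aemeasurable hZ.aemeasurable).1 hYZ,
        Measure.prod_apply hS]
      simp_rw [hsection]
    _ ≤ ∫⁻ _, ε ∂P.map Y := lintegral_mono fun y => by
      rw [Measure.map_apply hZ Metric.isOpen_ball.measurableSet]; exact hε _
    _ = ε := by simp

theorem volume_unitInterval_mul_mem_ball_le {c : ℝ} (hc : c ≠ 0) (a δ : ℝ) :
    volume {t : I | c * t ∈ Metric.ball a δ} ≤ ENNReal.ofReal (2 * δ / |c|) := by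
  calc volume {t : I | c * t ∈ Metric.ball a δ}
      = volume.restrict I ((fun t => c * t) ⁻¹' Metric.ball a δ) :=
        unitInterval.measurePreserving_coe.measure_preimage
          (measurableSet_preimage (by fun_prop) Metric.isOpen_ball.measurableSet).nullMeasurableSet
    _ ≤ volume ((fun t => c * t) ⁻¹' Metric.ball a δ) := Measure.restrict_le_self _
    _ = ENNReal.ofReal (2 * δ / |c|) := by
      rw [Real.volume_preimage_mul_left hc, Real.volume_ball, ← ENNReal.ofReal_mul (abs_nonneg _),
        abs_inv, inv_mul_eq_div]

theorem infinitePi_abs_sum_mul_lt_le {ι : Type*} (s : Finset ι) (w : ι → ℝ) {k : ι}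
    (hk : k ∈ s) (hwk : w k ≠ 0) (δ : ℝ) :
    Measure.infinitePi (fun _ : ι => (volume : Measure I))
        {u | |∑ i ∈ s, w i * u i| < δ} ≤ ENNReal.ofReal (2 * δ / |w k|) := by
  classical
  set f : ι → (ι → I) → ℝ := fun i u => w i * u i
  have hf : ∀ i, Measurable (f i) := fun i => by fun_prop
  have hindep : iIndepFun f (Measure.infinitePi fun _ : ι => (volume : Measure I)) :=
    iIndepFun_infinitePi (X := fun i (t : I) => w i * t) fun i => by fun_prop
  have hsplit : {u : ι → I | |∑ i ∈ s, w i * u i| < δ}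
      = {u | |(∑ i ∈ s.erase k, f i) u + f k u| < δ} := by
    ext u; simp [f, Finset.sum_apply, Finset.sum_erase_add _ _ hk]
  rw [hsplit]
  refine measure_abs_add_lt_le_of_indepFun (by fun_prop) (hf k)
    (hindep.indepFun_finsetSum_of_notMem hf (Finset.notMem_erase k s)) fun a => ?_
  have hball : MeasurableSet {t : I | w k * t ∈ Metric.ball a δ} :=
    measurableSet_preimage (by fun_prop) Metric.isOpen_ball.measurableSet
  exact ((measurePreserving_eval_infinitePi (fun _ : ι => (volume : Measure I)) k).measure_preimage
    hball.nullMeasurableSet).trans_le (volume_unitInterval_mul_mem_ball_le hwk a δ)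

theorem exists_forall_le_abs_sum_mul {ι J : Type*} [Countable J] (s : J → Finset ι)
    (w : J → ι → ℝ) (κ m : J → ℝ) (hκ : ∀ j, 0 ≤ κ j)
    (hm : ∀ j, 0 < m j ∧ ∃ k ∈ s j, m j ≤ |w j k|)
    (hsum : ∑' j, ENNReal.ofReal (2 * κ j / m j) < 1) :
    ∃ u : ι → I, ∀ j, κ j ≤ |∑ k ∈ s j, w j k * u k| := by
  set P := Measure.infinitePi fun _ : ι => (volume : Measure I)
  set bad : J → Set (ι → I) := fun j => {u | |∑ k ∈ s j, w j k * u k| < κ j}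
  have hbad (j : J) : P (bad j) ≤ ENNReal.ofReal (2 * κ j / m j) := by
    obtain ⟨hm0, k, hk, hmk⟩ := hm j
    calc P (bad j) ≤ ENNReal.ofReal (2 * κ j / |w j k|) :=
          infinitePi_abs_sum_mul_lt_le _ _ hk (abs_pos.1 (hm0.trans_le hmk)) _
      _ ≤ ENNReal.ofReal (2 * κ j / m j) := by gcongr; linarith [hκ j]
  obtain ⟨u, hu⟩ : (⋃ j, bad j)ᶜ.Nonempty := by
    rw [nonempty_compl]
    intro hcover
    have : P (⋃ j, bad j) < 1 := (measure_iUnion_le bad).trans_lt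
      ((ENNReal.tsum_le_tsum hbad).trans_lt hsum)
    simp [hcover] at this
  exact ⟨u, fun j => not_lt.1 fun h => hu (mem_iUnion_of_mem j h)⟩

theorem exists_forall_inv_pow_le_abs_sum_mul (w : ℕ → ℕ → ℝ)
    (hw : ∀ j : ℕ, ∃ k ∈ Finset.Iic j, 1 / ((j : ℝ) + 1) ^ 2 ≤ |w j k|) :
    ∃ u : ℕ → I, ∀ j : ℕ, 4⁻¹ / ((j : ℝ) + 1) ^ 4 ≤ |∑ k ∈ Finset.Iic j, w j k * u k| := by
  have h := hasSum_one_div_succ_sq.mul_left 2⁻¹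
  have hterm (j : ℕ) : 2 * (4⁻¹ / ((j : ℝ) + 1) ^ 4) / (1 / ((j : ℝ) + 1) ^ 2)
      = 2⁻¹ * (1 / ((j : ℝ) + 1) ^ 2) := by
    field_simp; norm_num
  refine exists_forall_le_abs_sum_mul _ w _ _ (fun j => by positivity)
    (fun j => ⟨by positivity, hw j⟩) ?_
  simp_rw [hterm]
  rw [← ENNReal.ofReal_tsum_of_nonneg (fun _ => by positivity) h.summable, h.tsum_eq,
    ENNReal.ofReal_lt_one]
  nlinarith [pi_lt_d2, pi_pos]

/-- Here `j : ℕ` stands for the `(j+1)`-st functional of the paper. -/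
theorem stmt4 {H : Type*} [NormedAddCommGroup H] [InnerProductSpace ℝ H] [CompleteSpace H]
    (φ : ℕ → (H →L[ℝ] ℝ)) (hφ : ∀ j, ‖φ j‖ = 1) :
    ∃ δ : ℕ → ℝ, (∀ j, 0 < δ j) ∧
      Tendsto (fun j : ℕ => (1 / ((j : ℝ) + 1)) * Real.log (δ j)) atTop (nhds 0) ∧
      ∃ x : H, ‖x‖ = 1 ∧ ∀ j, δ j ≤ |φ j x| := by
  set v : ℕ → H := fun j => (toDual ℝ H).symm (φ j)
  have hv (j : ℕ) : ‖v j‖ = 1 := by simp [v, hφ]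
  have hvφ (j : ℕ) (y : H) : ⟪v j, y⟫ = φ j y := toDual_symm_apply
  obtain ⟨u, hu⟩ := exists_forall_inv_pow_le_abs_sum_mul _
    (exists_le_abs_inner_gramSchmidtNormed_div hv)
  have ha : Summable fun k : ℕ => ((u k : ℝ) / ((k : ℝ) + 1)) ^ 2 := by
    refine hasSum_one_div_succ_sq.summable.of_nonneg_of_le (fun _ => sq_nonneg _) fun k => ?_
    rw [div_pow]
    gcongr
    exact pow_le_one₀ (u k).2.1 (u k).2.2
  obtain ⟨x, hx⟩ := exists_inner_eq_sum_gramSchmidtNormed v ha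
  have hux (j : ℕ) : 4⁻¹ / ((j : ℝ) + 1) ^ 4 ≤ |⟪v j, x⟫| := by
    rw [hx j]
    convert hu j using 3 with k
    ring
  have hx0 : x ≠ 0 := fun h => absurd (hux 0) (by norm_num [h])
  refine ⟨fun j => ‖x‖⁻¹ * 4⁻¹ / ((j : ℝ) + 1) ^ 4, fun j => by positivity,
    tendsto_one_div_succ_mul_log_div_pow (by positivity) 4, ‖x‖⁻¹ • x, norm_smul_inv_norm hx0,
    fun j => ?_⟩
  dsimp only
  rw [map_smul, smul_eq_mul, ← hvφ, abs_mul, abs_inv, abs_norm, mul_div_assoc]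
  exact mul_le_mul_of_nonneg_left (hux j) (by positivity)
end

section
/- Let H be a real Hilbert space and (φ_j)_{j∈ℕ} bounded linear functionals on H of norm 1. Then there exists a unit vector x ∈ H and a constant c > 0 such that |φ_j(x)| ≥ c·j⁻⁵ for all j ∈ ℕ. -/
/-!
Maximize `‖∑ₖ εₖ tₖ eₖ‖` over sign sequences `ε : ι → ℤˣ`; these form a compact space and, for
summable `t` and unit vectors `eₖ`, the sum depends continuously on `ε`. Flipping the `j`-th
sign of a maximizer `y` moves it by `2 tⱼ eⱼ` without increasing its norm, and expanding
`‖y - 2 εⱼ tⱼ eⱼ‖² ≤ ‖y‖²` gives `|tⱼ| ≤ |⟪y, eⱼ⟫|`. Taking for `eⱼ` the Riesz vectors of the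
`φⱼ` and `tⱼ = (j + 1)⁻⁵`, the normalization of `y` is the required vector.
-/

open scoped InnerProductSpace

namespace SignedSum

variable {ι H : Type*} [NormedAddCommGroup H] [InnerProductSpace ℝ H]

lemma abs_units_cast (u : ℤˣ) : |((u : ℤ) : ℝ)| = 1 := by
  rcases Int.units_eq_one_or u with rfl | rfl <;> simp

lemma sq_le_two_mul_inner_of_norm_sub_smul_le {y e : H} (he : ‖e‖ = 1) {c : ℝ}
    (h : ‖y - c • e‖ ≤ ‖y‖) : c ^ 2 ≤ 2 * (c * ⟪y, e⟫_ℝ) := by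
  have hsq := pow_le_pow_left₀ (norm_nonneg _) h 2
  rw [norm_sub_sq_real, norm_smul, he, real_inner_smul_right, Real.norm_eq_abs] at hsq
  nlinarith [sq_abs c]

variable {t : ι → ℝ} {e : ι → H}

lemma norm_signedTerm (he : ∀ k, ‖e k‖ = 1) (ε : ι → ℤˣ) (k : ι) :
    ‖(((ε k : ℤ) : ℝ) * t k) • e k‖ = |t k| := by
  rw [norm_smul, he, mul_one, Real.norm_eq_abs, abs_mul, abs_units_cast, one_mul]

variable [CompleteSpace H] (t e)

noncomputable def signedSum (ε : ι → ℤˣ) : H := ∑' k, (((ε k : ℤ) : ℝ) * t k) • e k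

variable {t e}

lemma summable_signedTerm (ht : Summable t) (he : ∀ k, ‖e k‖ = 1) (ε : ι → ℤˣ) :
    Summable fun k => (((ε k : ℤ) : ℝ) * t k) • e k :=
  .of_norm <| by simpa only [norm_signedTerm he] using ht.abs

lemma continuous_signedSum (ht : Summable t) (he : ∀ k, ‖e k‖ = 1) :
    Continuous (signedSum t e) :=
  continuous_tsum (fun k => (continuous_of_discreteTopology
      (f := fun u : ℤˣ => (((u : ℤ) : ℝ) * t k) • e k)).comp (continuous_apply k))
    ht.abs fun k ε => (norm_signedTerm he ε k).le

lemma signedSum_update_neg [DecidableEq ι] (ht : Summable t) (he : ∀ k, ‖e k‖ = 1)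
    (ε : ι → ℤˣ) (j : ι) :
    signedSum t e (Function.update ε j (-ε j)) =
      signedSum t e ε - (2 * ((ε j : ℤ) : ℝ) * t j) • e j := by
  refine (sub_sub_cancel _ _).symm.trans (congrArg _ ?_)
  rw [signedSum, signedSum,
    ← (summable_signedTerm ht he ε).tsum_sub (summable_signedTerm ht he _), tsum_eq_single j]
  · simp only [Function.update_self, Units.val_neg, Int.cast_neg, ← sub_smul]
    ring_nf
  · intro k hk
    simp [Function.update_of_ne hk]

theorem exists_abs_le_abs_inner (ht : Summable t) (he : ∀ k, ‖e k‖ = 1) :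
    ∃ y : H, ∀ j, |t j| ≤ |⟪y, e j⟫_ℝ| := by
  classical
  obtain ⟨ε, -, hε⟩ := isCompact_univ.exists_isMaxOn Set.univ_nonempty
    (continuous_signedSum ht he).norm.continuousOn
  refine ⟨signedSum t e ε, fun j => ?_⟩
  have hflip : ‖signedSum t e (Function.update ε j (-ε j))‖ ≤ ‖signedSum t e ε‖ :=
    hε (Set.mem_univ _)
  rw [signedSum_update_neg ht he] at hflip
  have key := sq_le_two_mul_inner_of_norm_sub_smul_le (he j) hflip
  set s : ℝ := ((ε j : ℤ) : ℝ)
  set a := ⟪signedSum t e ε, e j⟫_ℝ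
  have hs : |s| = 1 := abs_units_cast _
  have hc : (2 * s * t j) ^ 2 = 4 * t j ^ 2 := by
    rw [mul_pow, mul_pow, ← sq_abs s, hs]; ring
  have hta : |t j| ^ 2 ≤ |t j| * |a| :=
    calc |t j| ^ 2 = t j ^ 2 := sq_abs _
      _ ≤ t j * s * a := by linarith
      _ ≤ |t j * s * a| := le_abs_self _
      _ = |t j| * |a| := by rw [abs_mul, abs_mul, hs, mul_one]
  nlinarith [abs_nonneg (t j), abs_nonneg a]

end SignedSum

open SignedSum in
theorem exists_abs_le_abs_apply_of_summable {ι H : Type*} [NormedAddCommGroup H]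
    [InnerProductSpace ℝ H] [CompleteSpace H] (φ : ι → H →L[ℝ] ℝ) (hφ : ∀ j, ‖φ j‖ = 1)
    {t : ι → ℝ} (ht : Summable t) : ∃ y : H, ∀ j, |t j| ≤ |φ j y| := by
  let e j := (InnerProductSpace.toDual ℝ H).symm (φ j)
  have he j : ‖e j‖ = 1 := by simp [e, hφ]
  obtain ⟨y, hy⟩ := exists_abs_le_abs_inner ht he
  refine ⟨y, fun j => ?_⟩
  rw [← InnerProductSpace.toDual_symm_apply, real_inner_comm]
  exact hy j

/-- Quantitative version: for norm-one functionals `(φ_j)` on a real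
Hilbert space there are a unit vector `x` and `c > 0` with `|φ_j x| ≥ c·j⁻⁵` for all `j`
(here `j : ℕ` stands for the `(j+1)`-st functional of the paper). -/
theorem stmt5 {H : Type*} [NormedAddCommGroup H] [InnerProductSpace ℝ H] [CompleteSpace H]
    (φ : ℕ → (H →L[ℝ] ℝ)) (hφ : ∀ j, ‖φ j‖ = 1) :
    ∃ x : H, ‖x‖ = 1 ∧ ∃ c : ℝ, 0 < c ∧
      ∀ j : ℕ, c * (((j : ℝ) + 1) ^ 5)⁻¹ ≤ |φ j x| := by
  have hsum : Summable fun j : ℕ => (((j : ℝ) + 1) ^ 5)⁻¹ := by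
    exact_mod_cast (summable_nat_add_iff 1).mpr
      (Real.summable_nat_pow_inv.mpr (by norm_num : 1 < 5))
  obtain ⟨y, hy⟩ := exists_abs_le_abs_apply_of_summable φ hφ hsum
  have hy0 : y ≠ 0 := by
    rintro rfl
    have h0 := hy 0
    norm_num at h0
  refine ⟨‖y‖⁻¹ • y, norm_smul_inv_norm hy0, ‖y‖⁻¹, by positivity, fun j => ?_⟩
  rw [map_smul, smul_eq_mul, abs_mul, abs_inv, abs_norm]
  gcongr
  simpa [abs_of_pos (by positivity : (0 : ℝ) < (((j : ℝ) + 1) ^ 5)⁻¹)] using hy j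
end

section
/- Let X be a Banach space and x₁, x₂ ∈ X with ‖x₁‖ ≤ 1, ‖x₂‖ ≤ 1, ‖x₁‖ ≥ μ₁, and dist(x₂, span(x₁)) ≥ μ₂ for some 0 < μ₁, μ₂ ≤ 1. Then inf_{t∈ℝ} ‖t·x₁ + (1−t)·x₂‖ ≥ μ₁·μ₂/(2√5). -/
/-!
Write `s = 1 - t`. On the one hand `t • x₁ + s • x₂ = s • (x₂ + (t / s) • x₁)`, so its norm is at
least `|s| μ₂`; on the other hand it equals `x₁ + s • (x₂ - x₁)`, so its norm is at least
`μ₁ - 2 |s|`. Eliminating `|s|` between the two bounds gives `μ₁ μ₂ ≤ (2 + μ₂) ‖t • x₁ + s • x₂‖`,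
and `2 + μ₂ ≤ 3 < 2 √5`.
-/

section

variable {𝕜 E : Type*} [NormedField 𝕜] [NormedAddCommGroup E] [NormedSpace 𝕜 E]

theorem norm_mul_infDist_span_singleton_le_norm_smul_add (x y : E) (a b : 𝕜) :
    ‖b‖ * Metric.infDist y (Submodule.span 𝕜 {x} : Set E) ≤ ‖a • x + b • y‖ := by
  rcases eq_or_ne b 0 with rfl | hb
  · simp
  have hmem : -(b⁻¹ * a) • x ∈ Submodule.span 𝕜 {x} :=
    Submodule.smul_mem _ _ (Submodule.mem_span_singleton_self x)
  calc ‖b‖ * Metric.infDist y (Submodule.span 𝕜 {x} : Set E)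
      ≤ ‖b‖ * dist y (-(b⁻¹ * a) • x) := by gcongr; exact Metric.infDist_le_dist_of_mem hmem
    _ = ‖b • (y - -(b⁻¹ * a) • x)‖ := by rw [dist_eq_norm, norm_smul]
    _ = ‖a • x + b • y‖ := by
      have hcoeff : b * -(b⁻¹ * a) = -a := by field_simp
      rw [smul_sub, smul_smul, hcoeff, neg_smul, sub_neg_eq_add, add_comm]

theorem norm_le_norm_smul_add_one_sub_smul_add (x y : E) (t : 𝕜) :
    ‖x‖ ≤ ‖t • x + (1 - t) • y‖ + ‖1 - t‖ * ‖y - x‖ := by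
  have hdecomp : t • x + (1 - t) • y = x + (1 - t) • (y - x) := by
    rw [smul_sub, sub_smul, sub_smul, one_smul, one_smul]; abel
  rw [hdecomp, ← norm_smul]
  exact norm_le_add_norm_add _ _

end

theorem stmt6_general {X : Type*} [NormedAddCommGroup X] [NormedSpace ℝ X]
    (x₁ x₂ : X) (μ₁ μ₂ : ℝ)
    (hμ₁ : 0 < μ₁) (hμ₂ : 0 < μ₂) (hμ₂' : μ₂ ≤ 1)
    (hx₁ : ‖x₁‖ ≤ 1) (hx₂ : ‖x₂‖ ≤ 1)
    (hx₁' : μ₁ ≤ ‖x₁‖)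
    (hx₂' : μ₂ ≤ Metric.infDist x₂ (Submodule.span ℝ {x₁} : Set X)) :
    ∀ t : ℝ, μ₁ * μ₂ / (2 * Real.sqrt 5) ≤ ‖t • x₁ + (1 - t) • x₂‖ := by
  intro t
  set N := ‖t • x₁ + (1 - t) • x₂‖
  have hfar : |1 - t| * μ₂ ≤ N :=
    calc |1 - t| * μ₂ ≤ ‖1 - t‖ * Metric.infDist x₂ (Submodule.span ℝ {x₁} : Set X) := by
          rw [Real.norm_eq_abs]; gcongr
      _ ≤ N := norm_mul_infDist_span_singleton_le_norm_smul_add x₁ x₂ t (1 - t)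
  have hnear : μ₁ - 2 * |1 - t| ≤ N := by
    have hdiam : ‖x₂ - x₁‖ ≤ 2 := (norm_sub_le x₂ x₁).trans (by linarith)
    have := norm_le_norm_smul_add_one_sub_smul_add x₁ x₂ t
    rw [Real.norm_eq_abs] at this
    nlinarith [abs_nonneg (1 - t)]
  have hN : μ₁ * μ₂ ≤ (2 + μ₂) * N := by nlinarith [mul_le_mul_of_nonneg_left hnear hμ₂.le]
  have hsqrt5 : 2 + μ₂ ≤ 2 * Real.sqrt 5 := by
    nlinarith [Real.sq_sqrt (by norm_num : (0 : ℝ) ≤ 5), Real.sqrt_nonneg 5]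
  calc μ₁ * μ₂ / (2 * Real.sqrt 5) ≤ μ₁ * μ₂ / (2 + μ₂) := by gcongr
    _ ≤ N := by rwa [div_le_iff₀ (by positivity), mul_comm N]

/-- In a Banach space, if `‖x₁‖ ≤ 1`, `‖x₂‖ ≤ 1`, `‖x₁‖ ≥ μ₁` and
`dist(x₂, span x₁) ≥ μ₂` with `0 < μ₁, μ₂ ≤ 1`, then every affine combination
`t•x₁ + (1-t)•x₂` has norm at least `μ₁·μ₂/(2√5)`. -/
theorem stmt6 {X : Type*} [NormedAddCommGroup X] [NormedSpace ℝ X] [CompleteSpace X]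
    (x₁ x₂ : X) (μ₁ μ₂ : ℝ)
    (hμ₁ : 0 < μ₁) (hμ₁' : μ₁ ≤ 1) (hμ₂ : 0 < μ₂) (hμ₂' : μ₂ ≤ 1)
    (hx₁ : ‖x₁‖ ≤ 1) (hx₂ : ‖x₂‖ ≤ 1)
    (hx₁' : μ₁ ≤ ‖x₁‖)
    (hx₂' : μ₂ ≤ Metric.infDist x₂ (Submodule.span ℝ {x₁} : Set X)) :
    ∀ t : ℝ, μ₁ * μ₂ / (2 * Real.sqrt 5) ≤ ‖t • x₁ + (1 - t) • x₂‖ :=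
  stmt6_general x₁ x₂ μ₁ μ₂ hμ₁ hμ₂ hμ₂' hx₁ hx₂ hx₁' hx₂'
end

section
/- In the Euclidean plane ℝ², suppose x₁, x₂ ∈ B(0,1) with ‖x₁‖₂ ≥ μ₁ and the distance from x₂ to the line through 0 and x₁ is at least μ₂, where 0 < μ₁, μ₂ ≤ 1. Then the distance from the origin to the line through x₁ and x₂ is at least μ₁·μ₂/√5, i.e., inf_{t∈ℝ} ‖t x₁ + (1−t) x₂‖₂ ≥ μ₁·μ₂/√5. -/
/-!
Twice the area of the triangle `0, x₁, x₂` equals `‖x₁‖` times the distance from `x₂` to the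
line `ℝ x₁`, and also `‖x₁ - x₂‖` times the distance from `0` to the line through `x₁` and `x₂`.
The first product is at least `μ₁ μ₂`, and `‖x₁ - x₂‖ ≤ 2` in the unit ball, so the distance is
at least `μ₁ μ₂ / 2 ≥ μ₁ μ₂ / √5`. The area comparison is proved in an orthogonal frame
`x₁, q` with `x₂ = c x₁ + q`, where it becomes invariance of a `2 × 2` determinant under shears.
-/

open RealInnerProductSpace

variable {E : Type*} [NormedAddCommGroup E] [InnerProductSpace ℝ E]

theorem abs_det_mul_norm_mul_norm_le_of_inner_eq_zero {u v : E} (huv : ⟪u, v⟫ = 0)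
    (a b c d : ℝ) :
    |a * d - b * c| * (‖u‖ * ‖v‖) ≤ ‖a • u + b • v‖ * ‖c • u + d • v‖ := by
  have pythagoras (x y : ℝ) : ‖x • u + y • v‖ ^ 2 = x ^ 2 * ‖u‖ ^ 2 + y ^ 2 * ‖v‖ ^ 2 := by
    rw [norm_add_sq_real, real_inner_smul_left, real_inner_smul_right, huv, norm_smul, norm_smul,
      Real.norm_eq_abs, Real.norm_eq_abs, mul_pow, mul_pow, sq_abs, sq_abs]
    ring
  rw [← sq_le_sq₀ (by positivity) (by positivity), mul_pow, mul_pow, mul_pow, pythagoras,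
    pythagoras, sq_abs]
  -- `(a²U + b²V)(c²U + d²V) = (ad - bc)²UV + (acU + bdV)²`
  nlinarith [sq_nonneg (a * c * ‖u‖ ^ 2 + b * d * ‖v‖ ^ 2)]

theorem norm_mul_infDist_span_singleton_le (x₁ x₂ : E) (t : ℝ) :
    ‖x₁‖ * Metric.infDist x₂ (ℝ ∙ x₁) ≤ ‖x₁ - x₂‖ * ‖t • x₁ + (1 - t) • x₂‖ := by
  set K := ℝ ∙ x₁
  obtain ⟨c, hc⟩ := Submodule.mem_span_singleton.mp (K.starProjection_apply_mem x₂)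
  set q := x₂ - K.starProjection x₂
  have hq : ⟪x₁, q⟫ = 0 :=
    Submodule.mem_orthogonal_singleton_iff_inner_right.mp (K.sub_starProjection_mem_orthogonal x₂)
  have hx₂ : x₂ = c • x₁ + q := by rw [hc, add_sub_cancel]
  have hdist : Metric.infDist x₂ K ≤ ‖q‖ := by
    simpa [dist_eq_norm] using
      Metric.infDist_le_dist_of_mem (x := x₂) (K.starProjection_apply_mem x₂)
  have hshear :=
    abs_det_mul_norm_mul_norm_le_of_inner_eq_zero hq (1 - c) (-1) (t + (1 - t) * c) (1 - t)
  calc ‖x₁‖ * Metric.infDist x₂ K ≤ ‖x₁‖ * ‖q‖ := by gcongr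
    _ = |(1 - c) * (1 - t) - (-1) * (t + (1 - t) * c)| * (‖x₁‖ * ‖q‖) := by
      rw [show (1 - c) * (1 - t) - (-1) * (t + (1 - t) * c) = 1 by ring, abs_one, one_mul]
    _ ≤ _ := by convert hshear using 3 <;> rw [hx₂] <;> module

theorem stmt7_general (x₁ x₂ : EuclideanSpace ℝ (Fin 2)) (μ₁ μ₂ : ℝ)
    (hμ₁ : 0 < μ₁) (hμ₂ : 0 < μ₂)
    (hx₁ : ‖x₁‖ ≤ 1) (hx₂ : ‖x₂‖ ≤ 1)
    (hx₁' : μ₁ ≤ ‖x₁‖)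
    (hx₂' : μ₂ ≤ Metric.infDist x₂ (Submodule.span ℝ {x₁} : Set (EuclideanSpace ℝ (Fin 2)))) :
    ∀ t : ℝ, μ₁ * μ₂ / Real.sqrt 5 ≤ ‖t • x₁ + (1 - t) • x₂‖ := by
  intro t
  have hdiam : ‖x₁ - x₂‖ ≤ 2 := (norm_sub_le x₁ x₂).trans (by linarith)
  have hsqrt5 : 2 ≤ Real.sqrt 5 := Real.le_sqrt_of_sq_le (by norm_num)
  have harea : μ₁ * μ₂ ≤ 2 * ‖t • x₁ + (1 - t) • x₂‖ :=
    calc μ₁ * μ₂ ≤ ‖x₁‖ * Metric.infDist x₂ (ℝ ∙ x₁) := by gcongr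
      _ ≤ ‖x₁ - x₂‖ * ‖t • x₁ + (1 - t) • x₂‖ := norm_mul_infDist_span_singleton_le x₁ x₂ t
      _ ≤ 2 * ‖t • x₁ + (1 - t) • x₂‖ := by gcongr
  calc μ₁ * μ₂ / Real.sqrt 5 ≤ μ₁ * μ₂ / 2 := by gcongr
    _ ≤ ‖t • x₁ + (1 - t) • x₂‖ := by linarith

/-- Euclidean plane version: if `x₁, x₂` lie in the closed unit ball,
`‖x₁‖ ≥ μ₁`, and the distance of `x₂` to the line through `0` and `x₁` is at least `μ₂`
(`0 < μ₁, μ₂ ≤ 1`), then the line through `x₁` and `x₂` stays at distance at least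
`μ₁·μ₂/√5` from the origin. -/
theorem stmt7 (x₁ x₂ : EuclideanSpace ℝ (Fin 2)) (μ₁ μ₂ : ℝ)
    (hμ₁ : 0 < μ₁) (hμ₁' : μ₁ ≤ 1) (hμ₂ : 0 < μ₂) (hμ₂' : μ₂ ≤ 1)
    (hx₁ : ‖x₁‖ ≤ 1) (hx₂ : ‖x₂‖ ≤ 1)
    (hx₁' : μ₁ ≤ ‖x₁‖)
    (hx₂' : μ₂ ≤ Metric.infDist x₂ (Submodule.span ℝ {x₁} : Set (EuclideanSpace ℝ (Fin 2)))) :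
    ∀ t : ℝ, μ₁ * μ₂ / Real.sqrt 5 ≤ ‖t • x₁ + (1 - t) • x₂‖ :=
  stmt7_general x₁ x₂ μ₁ μ₂ hμ₁ hμ₂ hx₁ hx₂ hx₁' hx₂'
end

section
/- Let X be a finite-dimensional Banach space of dimension n and let (V_j)_{j∈ℕ} be a sequence of hyperplanes in X. Then for (Lebesgue) almost every x ∈ X, there exists ε > 0 such that dist(x/‖x‖, V_j) ≥ ε·j⁻² for all j ∈ ℕ; in particular span(x) is a well-separating common complement of (V_j). -/
/-!
Choose norm-one functionals `f j` vanishing on `V j`, so that `|f j y| ≤ dist(y, V j)`. Since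
`f j u = 1` for some `‖u‖ ≤ 2`, about `t⁻¹` disjoint translates of the slab
`{‖x‖ ≤ R, |f j x| < t}` fit into a ball of radius `R + 4`, so the slab has measure `O(t)`
uniformly in `j`. As `∑ (j + 1)⁻² < ∞`, the points of the ball with `|f j x| < ε (j + 1)⁻² ‖x‖`
for some `j` form a set of measure `O(ε)`, and letting `ε → 0` leaves a null set.
-/
open Filter MeasureTheory Metric Set ENNReal Topology

theorem natCast_mul_measure_le_of_pairwiseDisjoint {G : Type*} [MeasurableSpace G] [AddGroup G]
    [MeasurableAdd G] (μ : Measure G) [μ.IsAddRightInvariant] {s B : Set G}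
    (hs : MeasurableSet s) (v : ℕ → G) (K : ℕ)
    (hdisj : (Finset.range K : Set ℕ).PairwiseDisjoint fun m ↦ (· + v m) ⁻¹' s)
    (hB : ∀ m < K, (· + v m) ⁻¹' s ⊆ B) :
    K * μ s ≤ μ B :=
  calc (K : ℝ≥0∞) * μ s = ∑ m ∈ Finset.range K, μ ((· + v m) ⁻¹' s) := by
        simp [measure_preimage_add_right]
    _ = μ (⋃ m ∈ Finset.range K, (· + v m) ⁻¹' s) :=
        (measure_biUnion_finset hdisj fun m _ ↦ hs.preimage (measurable_add_const _)).symm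
    _ ≤ μ B := measure_mono (iUnion₂_subset fun m hm ↦ hB m (Finset.mem_range.mp hm))

theorem ENNReal.eq_zero_of_forall_pos_le_ofReal_mul {a C : ℝ≥0∞} (hC : C ≠ ∞)
    (h : ∀ ε > 0, a ≤ ENNReal.ofReal ε * C) : a = 0 := by
  have hlim : Tendsto (fun ε ↦ ENNReal.ofReal ε * C) (𝓝[>] 0) (𝓝 0) := by
    simpa using ENNReal.Tendsto.mul_const (ENNReal.tendsto_ofReal
      ((tendsto_id (x := 𝓝 (0 : ℝ))).mono_left nhdsWithin_le_nhds)) (Or.inr hC)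
  exact nonpos_iff_eq_zero.mp (ge_of_tendsto hlim (eventually_mem_nhdsWithin.mono h))

section
variable {X : Type*} [NormedAddCommGroup X] [NormedSpace ℝ X]

theorem ContinuousLinearMap.exists_apply_eq_one_norm_le_two {f : X →L[ℝ] ℝ} (hf : ‖f‖ = 1) :
    ∃ u, f u = 1 ∧ ‖u‖ ≤ 2 := by
  obtain ⟨v, hv, hfv⟩ := f.exists_lt_apply_of_lt_opNorm (r := 1 / 2) (by rw [hf]; norm_num)
  have hfv0 : f v ≠ 0 := by rintro h; rw [h, norm_zero] at hfv; norm_num at hfv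
  refine ⟨(f v)⁻¹ • v, by simp [hfv0], ?_⟩
  rw [norm_smul, norm_inv]
  calc ‖f v‖⁻¹ * ‖v‖ ≤ 2 * 1 := by
        gcongr
        rw [inv_le_comm₀ (by positivity) two_pos]; linarith
    _ = 2 := by norm_num

theorem abs_apply_le_infDist {f : X →L[ℝ] ℝ} (hf : ‖f‖ ≤ 1) {V : Submodule ℝ X}
    (hV : ∀ v ∈ V, f v = 0) (y : X) : |f y| ≤ infDist y V :=
  (le_infDist ⟨0, V.zero_mem⟩).2 fun v hv ↦
    calc |f y| = ‖f (y - v)‖ := by rw [map_sub, hV v hv, sub_zero, Real.norm_eq_abs]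
      _ ≤ ‖f‖ * ‖y - v‖ := f.le_opNorm _
      _ ≤ dist y v := by rw [dist_eq_norm]; exact mul_le_of_le_one_left (norm_nonneg _) hf

theorem Submodule.exists_norm_eq_one_forall_mem_apply_eq_zero [FiniteDimensional ℝ X]
    {V : Submodule ℝ X} (hV : V ≠ ⊤) : ∃ f : X →L[ℝ] ℝ, ‖f‖ = 1 ∧ ∀ v ∈ V, f v = 0 := by
  obtain ⟨φ, hφ0, hφV⟩ := Submodule.exists_dual_map_eq_bot_of_lt_top hV.lt_top inferInstance
  set g := LinearMap.toContinuousLinearMap φ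
  have hg : g ≠ 0 := fun h ↦ hφ0 (by ext x; exact congr($h x))
  refine ⟨‖g‖⁻¹ • g, norm_smul_inv_norm hg, fun v hv ↦ ?_⟩
  have hφv : φ v = 0 := by
    rw [← Submodule.mem_bot ℝ, ← hφV]; exact Submodule.mem_map_of_mem hv
  simp [g, hφv]

variable [MeasurableSpace X] [BorelSpace X]

theorem measure_norm_le_abs_apply_lt_le (μ : Measure X) [μ.IsAddRightInvariant]
    (f : X →L[ℝ] ℝ) {u : X} (hu : f u = 1) (R : ℝ) {t : ℝ} (ht : 0 < t) :
    μ {x | ‖x‖ ≤ R ∧ |f x| < t} ≤ ENNReal.ofReal t * μ (closedBall 0 (R + 2 * ‖u‖)) := by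
  set S := {x | ‖x‖ ≤ R ∧ |f x| < t}
  have hS : MeasurableSet S :=
    (isClosed_le continuous_norm continuous_const).measurableSet.inter
      (isOpen_lt (continuous_abs.comp f.continuous) continuous_const).measurableSet
  set K := ⌈t⁻¹⌉₊
  have hmt : ∀ m < K, (m : ℝ) * t < 1 := fun m hm ↦
    calc (m : ℝ) * t < t⁻¹ * t := by gcongr; exact Nat.lt_ceil.mp hm
      _ = 1 := inv_mul_cancel₀ ht.ne'
  -- Shifting by `2 m t • u` moves the values of `f` on `S` into `(2 m t - t, 2 m t + t)`.
  have hdisj : (Finset.range K : Set ℕ).PairwiseDisjoint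
      fun m : ℕ ↦ (· + (2 * m * t) • u) ⁻¹' S := by
    intro i _ j _ hij
    refine disjoint_left.mpr fun x hi hj ↦ hij ?_
    have hi := abs_lt.mp hi.2
    have hj := abs_lt.mp hj.2
    simp only [map_add, map_smul, hu, smul_eq_mul, mul_one] at hi hj
    have h1 : i < j + 1 := by exact_mod_cast (by nlinarith : (i : ℝ) < j + 1)
    have h2 : j < i + 1 := by exact_mod_cast (by nlinarith : (j : ℝ) < i + 1)
    omega
  have hball : ∀ m < K, (· + (2 * m * t) • u) ⁻¹' S ⊆ closedBall 0 (R + 2 * ‖u‖) := by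
    intro m hm x hx
    rw [mem_closedBall_zero_iff]
    have hv : ‖(2 * m * t) • u‖ ≤ 2 * ‖u‖ := by
      rw [norm_smul, Real.norm_of_nonneg (by positivity)]
      have := hmt m hm
      gcongr; nlinarith
    calc ‖x‖ ≤ ‖x + (2 * m * t) • u‖ + ‖(2 * m * t) • u‖ := norm_le_add_norm_add _ _
      _ ≤ R + 2 * ‖u‖ := add_le_add hx.1 hv
  have hK : 1 ≤ ENNReal.ofReal t * K := by
    rw [← ENNReal.ofReal_natCast, ← ENNReal.ofReal_mul ht.le]
    exact ENNReal.one_le_ofReal.mpr ((inv_le_iff_one_le_mul₀' ht).mp (Nat.le_ceil _))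
  calc μ S ≤ ENNReal.ofReal t * K * μ S := le_mul_of_one_le_left zero_le hK
    _ = ENNReal.ofReal t * (K * μ S) := mul_assoc _ _ _
    _ ≤ _ := by
      gcongr
      exact natCast_mul_measure_le_of_pairwiseDisjoint μ hS _ K hdisj hball

theorem measure_norm_le_abs_apply_lt_le_of_norm_eq_one (μ : Measure X) [μ.IsAddRightInvariant]
    {f : X →L[ℝ] ℝ} (hf : ‖f‖ = 1) (R : ℝ) {t : ℝ} (ht : 0 < t) :
    μ {x | ‖x‖ ≤ R ∧ |f x| < t} ≤ ENNReal.ofReal t * μ (closedBall 0 (R + 4)) := by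
  obtain ⟨u, hu, hu2⟩ := f.exists_apply_eq_one_norm_le_two hf
  grw [measure_norm_le_abs_apply_lt_le μ f hu R ht]
  gcongr
  linarith

theorem ae_exists_pos_forall_mul_norm_le_abs_apply [FiniteDimensional ℝ X] (μ : Measure X)
    [μ.IsAddHaarMeasure] {w : ℕ → ℝ} (hw0 : ∀ j, 0 < w j) (hw : Summable w)
    (f : ℕ → X →L[ℝ] ℝ) (hf : ∀ j, ‖f j‖ = 1) :
    ∀ᵐ x ∂μ, ∃ ε > 0, ∀ j, ε * w j * ‖x‖ ≤ |f j x| := by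
  set N := {x : X | ∀ ε > 0, ∃ j, |f j x| < ε * w j * ‖x‖}
  have hN : ∀ R > 0, μ (N ∩ closedBall 0 R) = 0 := by
    intro R hR
    refine ENNReal.eq_zero_of_forall_pos_le_ofReal_mul (C :=
      ENNReal.ofReal (R * ∑' j, w j) * μ (closedBall 0 (R + 4)))
      (mul_ne_top ofReal_ne_top measure_closedBall_lt_top.ne) fun ε hε ↦ ?_
    have hcover : N ∩ closedBall 0 R ⊆ ⋃ j, {x | ‖x‖ ≤ R ∧ |f j x| < ε * w j * R} := by
      rintro x ⟨hxN, hxR⟩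
      rw [mem_closedBall_zero_iff] at hxR
      obtain ⟨j, hj⟩ := hxN ε hε
      exact mem_iUnion.mpr ⟨j, hxR, hj.trans_le (by have := hw0 j; gcongr)⟩
    calc μ (N ∩ closedBall 0 R)
        ≤ ∑' j, μ {x | ‖x‖ ≤ R ∧ |f j x| < ε * w j * R} := measure_mono hcover |>.trans
          (measure_iUnion_le _)
      _ ≤ ∑' j, ENNReal.ofReal (ε * w j * R) * μ (closedBall 0 (R + 4)) :=
          ENNReal.tsum_le_tsum fun j ↦ measure_norm_le_abs_apply_lt_le_of_norm_eq_one μ (hf j) R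
            (by have := hw0 j; positivity)
      _ = ENNReal.ofReal (∑' j, ε * w j * R) * μ (closedBall 0 (R + 4)) := by
          rw [ENNReal.tsum_mul_right, ENNReal.ofReal_tsum_of_nonneg
            (fun j ↦ by have := hw0 j; positivity) ((hw.mul_left ε).mul_right R)]
      _ = _ := by
          rw [tsum_mul_right, tsum_mul_left, ← mul_assoc, ← ENNReal.ofReal_mul hε.le, mul_comm R,
            mul_assoc ε]
  rw [ae_iff]
  refine measure_mono_null (fun x hx ↦ ?_)
    (measure_iUnion_null fun k : ℕ ↦ hN (k + 1) (by positivity))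
  push Not at hx
  obtain ⟨k, hk⟩ := exists_nat_ge ‖x‖
  exact mem_iUnion.mpr ⟨k, hx, mem_closedBall_zero_iff.mpr (by linarith)⟩

end

theorem stmt10_general {X : Type*} [NormedAddCommGroup X] [NormedSpace ℝ X]
    [MeasurableSpace X] [BorelSpace X] (n : ℕ) [FiniteDimensional ℝ X]
    (b : Module.Basis (Fin n) ℝ X)
    (V : ℕ → Submodule ℝ X)
    (hV : ∀ j, Module.finrank ℝ (X ⧸ V j) = 1) :
    ∀ᵐ x ∂b.addHaar,
      (∀ j, IsCompl (V j) (Submodule.span ℝ {x})) ∧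
      ∃ ε : ℝ, 0 < ε ∧
        ∀ j : ℕ, ε * (((j : ℝ) + 1) ^ 2)⁻¹ ≤ Metric.infDist (‖x‖⁻¹ • x) (V j : Set X) := by
  have hcoatom : ∀ j, IsCoatom (V j) := fun j ↦
    isSimpleModule_iff_isCoatom.mp (isSimpleModule_iff_finrank_eq_one.mpr (hV j))
  choose f hf hfV using fun j ↦ (V j).exists_norm_eq_one_forall_mem_apply_eq_zero (hcoatom j).1
  have hw : Summable fun j : ℕ ↦ (((j : ℝ) + 1) ^ 2)⁻¹ := by
    simpa using (summable_nat_add_iff 1).mpr (Real.summable_nat_pow_inv.mpr one_lt_two)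
  have hnotMem : ∀ᵐ x ∂b.addHaar, ∀ j, x ∉ V j :=
    ae_all_iff.mpr fun j ↦
      measure_eq_zero_iff_ae_notMem.mp (Measure.addHaar_submodule _ _ (hcoatom j).1)
  filter_upwards [hnotMem, ae_exists_pos_forall_mul_norm_le_abs_apply b.addHaar
    (fun j ↦ by positivity) hw f hf] with x hxV ⟨ε, hε, hεx⟩
  have hx : 0 < ‖x‖ := norm_pos_iff.mpr fun h ↦ hxV 0 (h ▸ (V 0).zero_mem)
  refine ⟨fun j ↦ Submodule.isCompl_span_singleton_of_isCoatom_of_notMem (hcoatom j) (hxV j),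
    ε, hε, fun j ↦ ?_⟩
  calc ε * (((j : ℝ) + 1) ^ 2)⁻¹ = ‖x‖⁻¹ * (ε * (((j : ℝ) + 1) ^ 2)⁻¹ * ‖x‖) := by
        field_simp
    _ ≤ ‖x‖⁻¹ * |f j x| := by gcongr; exact hεx j
    _ = |f j (‖x‖⁻¹ • x)| := by rw [map_smul, smul_eq_mul, abs_mul, abs_of_pos (inv_pos.mpr hx)]
    _ ≤ _ := abs_apply_le_infDist (hf j).le (hfV j) _

/-- In a finite-dimensional Banach space `X` of dimension `n`, for a
sequence of hyperplanes `(V_j)` and Lebesgue measure (obtained from any basis of `X`),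
almost every `x ∈ X` spans a common complement of all the `V_j` and there is `ε > 0`
with `dist(x/‖x‖, V_j) ≥ ε·j⁻²` for all `j`; in particular `span{x}` is a
well-separating common complement (here `j : ℕ` stands for the `(j+1)`-st index of the
paper). -/
theorem stmt10 {X : Type*} [NormedAddCommGroup X] [NormedSpace ℝ X]
    [MeasurableSpace X] [BorelSpace X] (n : ℕ) [FiniteDimensional ℝ X]
    (hdim : Module.finrank ℝ X = n) (b : Module.Basis (Fin n) ℝ X)
    (V : ℕ → Submodule ℝ X)
    (hV : ∀ j, Module.finrank ℝ (X ⧸ V j) = 1) :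
    ∀ᵐ x ∂b.addHaar,
      (∀ j, IsCompl (V j) (Submodule.span ℝ {x})) ∧
      ∃ ε : ℝ, 0 < ε ∧
        ∀ j : ℕ, ε * (((j : ℝ) + 1) ^ 2)⁻¹ ≤ Metric.infDist (‖x‖⁻¹ • x) (V j : Set X) :=
  stmt10_general n b V hV
end

section
/- Let X be a Banach space and (V_j)_{j∈ℕ} closed complemented subspaces of codimension k. The set of all tuples (c₁,…,c_k) ∈ Xᵏ such that span(c₁,…,c_k) is a well-separating common complement of (V_j) is a Borel subset of Xᵏ. -/
/-!
Linear independence of `k` vectors is an open condition, and for a closed `V` of codimension `k`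
so is spanning a complement of `V`: it says that the images of the vectors in the `k`-dimensional
normed space `X ⧸ V` are independent. On independent tuples, `g_j(c)` is the infimum over the
compact unit sphere of `ℝᵏ` of `a ↦ dist(∑ aᵢ cᵢ, V_j) / ‖∑ aᵢ cᵢ‖`, a function jointly
continuous in `(c, a)`, so `g_j` is continuous there. The set in question is therefore cut out of
an open set by countably many conditions on continuous functions.
-/

open Filter Metric Submodule Set Module

section Complement

variable {K M ι : Type*} [DivisionRing K] [AddCommGroup M] [Module K M] [Fintype ι]

theorem Submodule.isCompl_span_range_iff_linearIndependent_mkQ (V : Submodule K M)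
    [FiniteDimensional K (M ⧸ V)] (hcodim : finrank K (M ⧸ V) = Fintype.card ι) (c : ι → M) :
    IsCompl V (span K (range c)) ↔ LinearIndependent K (V.mkQ ∘ c) := by
  have hspan : span K (range (V.mkQ ∘ c)) = ⊤ ↔ Codisjoint V (span K (range c)) := by
    rw [range_comp, ← map_span, map_mkQ_eq_top, codisjoint_iff]
  refine ⟨fun h => linearIndependent_of_top_le_span_of_card_eq_finrank
    (hspan.2 h.codisjoint).ge hcodim.symm, fun h => ⟨?_, hspan.1
      (h.span_eq_top_of_card_eq_finrank' hcodim.symm)⟩⟩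
  simpa using (Submodule.range_ker_disjoint h).symm

end Complement

theorem isOpen_setOf_isCompl_span {𝕜 X ι : Type*} [NontriviallyNormedField 𝕜] [CompleteSpace 𝕜]
    [NormedAddCommGroup X] [NormedSpace 𝕜 X] [Fintype ι] (V : Submodule 𝕜 X)
    [IsClosed (V : Set X)] (hcodim : finrank 𝕜 (X ⧸ V) = Fintype.card ι) :
    IsOpen {c : ι → X | IsCompl V (span 𝕜 (range c))} := by
  refine isOpen_iff_mem_nhds.2 fun c hc => ?_
  have := FiniteDimensional.span_of_finite 𝕜 (finite_range c)
  have : FiniteDimensional 𝕜 (X ⧸ V) := (V.quotientEquivOfIsCompl _ hc).symm.finiteDimensional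
  have hmkQ : Continuous fun c : ι → X => V.mkQ ∘ c :=
    continuous_pi fun i => continuous_quot_mk.comp (continuous_apply i)
  simp_rw [isCompl_span_range_iff_linearIndependent_mkQ V hcodim] at hc ⊢
  exact (isOpen_setOfPred_linearIndependent.preimage hmkQ).mem_nhds hc

theorem infDist_smul_submodule {𝕜 X : Type*} [NormedField 𝕜] [SeminormedAddCommGroup X]
    [NormedSpace 𝕜 X] (V : Submodule 𝕜 X) (r : 𝕜) (x : X) :
    infDist (r • x) (V : Set X) = ‖r‖ * infDist x V := by
  have norm_mkQ (y : X) : ‖V.mkQ y‖ = infDist y V :=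
    QuotientAddGroup.norm_mk (S := V.toAddSubgroup) y
  rw [← norm_mkQ, ← norm_mkQ, map_smul, norm_smul]

section Transversality

variable {X : Type*} [NormedAddCommGroup X] [NormedSpace ℝ X]

theorem image_unitSphere_range_eq_image_sphere {E : Type*} [NormedAddCommGroup E]
    [NormedSpace ℝ E] {L : E →ₗ[ℝ] X} (hL : Function.Injective L) {f : X → ℝ}
    (hf : ∀ (r : ℝ) (x : X), 0 < r → f (r • x) = r * f x) :
    f '' {x | x ∈ LinearMap.range L ∧ ‖x‖ = 1} = (fun a => f (L a) / ‖L a‖) '' sphere 0 1 := by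
  ext y
  constructor
  · rintro ⟨x, ⟨⟨b, rfl⟩, hb⟩, rfl⟩
    have hb0 : b ≠ 0 := by rintro rfl; simp at hb
    refine ⟨‖b‖⁻¹ • b, by simpa using norm_smul_inv_norm (𝕜 := ℝ) hb0, ?_⟩
    simp only [map_smul, norm_smul, hb, hf _ _ (inv_pos.2 (norm_pos_iff.2 hb0)), norm_inv,
      norm_norm]
    field_simp
  · rintro ⟨a, ha, rfl⟩
    have hLa : L a ≠ 0 := fun h => by
      simp [(map_eq_zero_iff L hL).1 h] at ha
    refine ⟨‖L a‖⁻¹ • L a, ⟨⟨‖L a‖⁻¹ • a, map_smul ..⟩, norm_smul_inv_norm hLa⟩, ?_⟩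
    rw [hf _ _ (by positivity), inv_mul_eq_div]

/-- The paper's `g_j(c)` is `degreeOfTransversality (V j) (span ℝ (range c))`.
When `W = ⊥` the infimum is over the empty set, so the value is `0`. -/
noncomputable def degreeOfTransversality (V W : Submodule ℝ X) : ℝ :=
  sInf ((fun x => infDist x (V : Set X)) '' {x | x ∈ W ∧ ‖x‖ = 1})

theorem degreeOfTransversality_span_eq {ι : Type*} [Fintype ι] (V : Submodule ℝ X) {c : ι → X}
    (hc : LinearIndependent ℝ c) :
    degreeOfTransversality V (span ℝ (range c)) =
      sInf (range fun a : sphere (0 : ι → ℝ) 1 =>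
        infDist (∑ i, (a : ι → ℝ) i • c i) (V : Set X) / ‖∑ i, (a : ι → ℝ) i • c i‖) := by
  rw [degreeOfTransversality, ← Fintype.range_linearCombination,
    image_unitSphere_range_eq_image_sphere
      (linearIndependent_iff_injective_fintypeLinearCombination.1 hc)
      fun r x hr => by rw [infDist_smul_submodule, Real.norm_of_nonneg hr.le],
    image_eq_range]
  simp only [Fintype.linearCombination_apply]

theorem continuousOn_degreeOfTransversality_span {ι : Type*} [Fintype ι] (V : Submodule ℝ X) :
    ContinuousOn (fun c : ι → X => degreeOfTransversality V (span ℝ (range c)))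
      {c | LinearIndependent ℝ c} := by
  rw [continuousOn_iff_continuous_domRestrict]
  have hsum_ne (c : {c : ι → X | LinearIndependent ℝ c}) (a : sphere (0 : ι → ℝ) 1) :
      ∑ i, (a : ι → ℝ) i • (c : ι → X) i ≠ 0 := fun h => by
    have ha : (a : ι → ℝ) = 0 := funext (Fintype.linearIndependent_iff.1 c.2 _ h)
    simpa [ha] using a.2
  have hsum : Continuous fun p : {c : ι → X | LinearIndependent ℝ c} × sphere (0 : ι → ℝ) 1 =>
      ∑ i, (p.2 : ι → ℝ) i • (p.1 : ι → X) i :=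
    continuous_finsetSum _ fun i _ =>
      ((continuous_apply i).comp (continuous_subtype_val.comp continuous_snd)).smul
        ((continuous_apply i).comp (continuous_subtype_val.comp continuous_fst))
  have hcont : Continuous ↿fun (c : {c : ι → X | LinearIndependent ℝ c})
      (a : sphere (0 : ι → ℝ) 1) =>
        infDist (∑ i, (a : ι → ℝ) i • (c : ι → X) i) (V : Set X) /
          ‖∑ i, (a : ι → ℝ) i • (c : ι → X) i‖ :=
    ((continuous_infDist_pt _).comp hsum).div hsum.norm
      fun p => norm_ne_zero_iff.2 (hsum_ne p.1 p.2)
  convert isCompact_univ.continuous_sInf hcont using 2 with c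
  rw [image_univ]
  exact degreeOfTransversality_span_eq V c.2

end Transversality

theorem stmt12_general {X : Type*} [NormedAddCommGroup X] [NormedSpace ℝ X]
    (k : ℕ) (V : ℕ → Submodule ℝ X)
    (hVclosed : ∀ j, IsClosed (V j : Set X))
    (hVcodim : ∀ j, Module.finrank ℝ (X ⧸ V j) = k) :
    @MeasurableSet (Fin k → X) (borel (Fin k → X))
      {c : Fin k → X |
        LinearIndependent ℝ c ∧
        (∀ j, IsCompl (V j) (Submodule.span ℝ (Set.range c))) ∧
        (∀ j, 0 < sInf ((fun x => Metric.infDist x (V j : Set X)) ''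
          {x : X | x ∈ Submodule.span ℝ (Set.range c) ∧ ‖x‖ = 1})) ∧
        Tendsto (fun j : ℕ => (1 / ((j : ℝ) + 1)) *
          Real.log (sInf ((fun x => Metric.infDist x (V j : Set X)) ''
            {x : X | x ∈ Submodule.span ℝ (Set.range c) ∧ ‖x‖ = 1})))
          atTop (nhds 0)} := by
  let : MeasurableSpace (Fin k → X) := borel _
  have : BorelSpace (Fin k → X) := ⟨rfl⟩
  have hcompl (j : ℕ) : IsOpen {c : Fin k → X | IsCompl (V j) (span ℝ (range c))} :=
    have := hVclosed j
    isOpen_setOf_isCompl_span (V j) (by simpa using hVcodim j)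
  have hdeg (j : ℕ) := continuousOn_iff_continuous_domRestrict.1
    (continuousOn_degreeOfTransversality_span (ι := Fin k) (V j))
  rw [ofPred_and, ← Subtype.image_preimage_coe]
  refine isOpen_setOfPred_linearIndependent.measurableSet.subtype_image
    (measurableSet_setOfPred.2 ?_)
  refine .and (.forall fun j => ?_) (.and (.forall fun j => ?_) ?_)
  · exact measurableSet_setOfPred.1 ((hcompl j).preimage continuous_subtype_val).measurableSet
  · exact measurableSet_setOfPred.1 (measurableSet_lt measurable_const (hdeg j).measurable)
  · exact measurableSet_setOfPred.1
      (measurableSet_tendsto _ fun j => (hdeg j).measurable.log.const_mul _)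

/-- For closed complemented codimension-`k` subspaces `(V_j)` of a
Banach space `X`, the set of tuples `(c₁,…,c_k) ∈ Xᵏ` spanning a well-separating common
complement of `(V_j)` (the `cᵢ` are linearly independent, the span is a complement of
every `V_j`, and the degrees of transversality `g_j` are positive with
`(1/j)·log g_j → 0`) is a Borel subset of `Xᵏ`. -/
theorem stmt12 {X : Type*} [NormedAddCommGroup X] [NormedSpace ℝ X] [CompleteSpace X]
    (k : ℕ) (V : ℕ → Submodule ℝ X)
    (hVclosed : ∀ j, IsClosed (V j : Set X))
    (hVcompl : ∀ j, ∃ W : Submodule ℝ X, IsCompl (V j) W)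
    (hVcodim : ∀ j, Module.finrank ℝ (X ⧸ V j) = k) :
    @MeasurableSet (Fin k → X) (borel (Fin k → X))
      {c : Fin k → X |
        LinearIndependent ℝ c ∧
        (∀ j, IsCompl (V j) (Submodule.span ℝ (Set.range c))) ∧
        (∀ j, 0 < sInf ((fun x => Metric.infDist x (V j : Set X)) ''
          {x : X | x ∈ Submodule.span ℝ (Set.range c) ∧ ‖x‖ = 1})) ∧
        Tendsto (fun j : ℕ => (1 / ((j : ℝ) + 1)) *
          Real.log (sInf ((fun x => Metric.infDist x (V j : Set X)) ''
            {x : X | x ∈ Submodule.span ℝ (Set.range c) ∧ ‖x‖ = 1})))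
          atTop (nhds 0)} :=
  stmt12_general k V hVclosed hVcodim
end
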